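/- arXiv:2103.13462 — 2 statements merged into one kernel-verified Lean document; each statement's English description precedes it below -/
import Mathlib

section
/- Let M be symmetric PSD with top unit eigenvector v₁ and top eigenvalue λ₁. Suppose x is an eigenvector of M with eigenvalue λ = ‖x‖₂² < λ₁. Then v₁ᵀ(2xxᵀ − M + ‖x‖₂² I)v₁ = λ − λ₁ < 0, so the Hessian of g(x) = (1/2)‖M − xxᵀ‖_F² at x is not positive semidefinite and x is not a local minimum of g. -/
open Matrix Finset

/-!
Write g(y) = ½‖M - y yᵀ‖_F² = ½‖M‖_F² - yᵀ M y + ½ ‖y‖⁴. The top eigenvector v₁ is orthogonal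
to x, so g(x + t v₁) - g(x) = t² (‖x‖² - λ₁) + t⁴ / 2, which is negative for small t ≠ 0.
The coefficient ‖x‖² - λ₁ of t² is v₁ᵀ (2 x xᵀ - M + ‖x‖² I) v₁.
-/

open Filter Topology in
theorem not_isLocalMin_of_sub_eq_sq_mul {f c : ℝ → ℝ} (hf : ∀ t, f t - f 0 = t ^ 2 * c t)
    (hc : ContinuousAt c 0) (hc0 : c 0 < 0) : ¬IsLocalMin f 0 := by
  intro hmin
  have hneg : ∀ᶠ t in 𝓝[≠] 0, f t < f 0 := by
    filter_upwards [nhdsWithin_le_nhds (hc.eventually (gt_mem_nhds hc0)),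
      self_mem_nhdsWithin] with t hct ht
    have : t ^ 2 * c t < 0 := mul_neg_of_pos_of_neg (sq_pos_of_ne_zero ht) hct
    linarith [hf t]
  obtain ⟨t, hlt, hle⟩ := (hneg.and (nhdsWithin_le_nhds hmin)).exists
  exact hlt.not_ge hle

section

variable {n : Type*} [Fintype n]

theorem sum_sq_eq_dotProduct_self (x : n → ℝ) : ∑ i, x i ^ 2 = x ⬝ᵥ x := by
  simp only [dotProduct, sq]

theorem dotProduct_eq_zero_of_isSymm_of_mulVec_eq_smul {M : Matrix n n ℝ} (hM : M.IsSymm)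
    {v w : n → ℝ} {μ ν : ℝ} (hv : M *ᵥ v = μ • v) (hw : M *ᵥ w = ν • w) (hμν : μ ≠ ν) :
    v ⬝ᵥ w = 0 := by
  have h : μ * (v ⬝ᵥ w) = ν * (v ⬝ᵥ w) := calc
    μ * (v ⬝ᵥ w) = (M *ᵥ v) ⬝ᵥ w := by rw [hv, smul_dotProduct, smul_eq_mul]
    _ = v ⬝ᵥ (M *ᵥ w) := by rw [dotProduct_mulVec, ← vecMul_transpose, hM.eq]
    _ = ν * (v ⬝ᵥ w) := by rw [hw, dotProduct_smul, smul_eq_mul]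
  have : (μ - ν) * (v ⬝ᵥ w) = 0 := by rw [sub_mul, h, sub_self]
  exact (mul_eq_zero.1 this).resolve_left (sub_ne_zero.2 hμν)

theorem dotProduct_smul_vecMulVec_sub_add_smul_one_mulVec {M : Matrix n n ℝ} [DecidableEq n]
    {x v : n → ℝ} {μ : ℝ} (hv : M *ᵥ v = μ • v) (hvv : v ⬝ᵥ v = 1) (hxv : x ⬝ᵥ v = 0)
    (a c : ℝ) : v ⬝ᵥ (a • vecMulVec x x - M + c • 1) *ᵥ v = c - μ := by
  rw [add_mulVec, sub_mulVec, smul_mulVec, smul_mulVec, one_mulVec, vecMulVec_mulVec, hv, hxv]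
  simp only [MulOpposite.op_zero, zero_smul, smul_zero, zero_sub, dotProduct_add, dotProduct_neg,
    dotProduct_smul, hvv, smul_eq_mul, mul_one]
  ring

theorem sum_sum_sub_mul_sq (M : Matrix n n ℝ) (y : n → ℝ) :
    ∑ i, ∑ j, (M i j - y i * y j) ^ 2
      = ∑ i, ∑ j, M i j ^ 2 - 2 * (y ⬝ᵥ M *ᵥ y) + (y ⬝ᵥ y) ^ 2 := by
  have hQ : y ⬝ᵥ M *ᵥ y = ∑ i, ∑ j, y i * (M i j * y j) := by
    simp only [dotProduct, mulVec, Finset.mul_sum]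
  rw [hQ, sq (y ⬝ᵥ y), dotProduct, Finset.sum_mul_sum, Finset.mul_sum,
    ← Finset.sum_sub_distrib, ← Finset.sum_add_distrib]
  refine Finset.sum_congr rfl fun i _ => ?_
  rw [Finset.mul_sum, ← Finset.sum_sub_distrib, ← Finset.sum_add_distrib]
  exact Finset.sum_congr rfl fun j _ => by ring

noncomputable def rankOneLoss (M : Matrix n n ℝ) (y : n → ℝ) : ℝ :=
  1 / 2 * ∑ i, ∑ j, (M i j - y i * y j) ^ 2

theorem rankOneLoss_add_smul_sub {M : Matrix n n ℝ} {x v : n → ℝ} {ν μ : ℝ}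
    (hx : M *ᵥ x = ν • x) (hv : M *ᵥ v = μ • v) (hvv : v ⬝ᵥ v = 1) (hxv : x ⬝ᵥ v = 0) (t : ℝ) :
    rankOneLoss M (x + t • v) - rankOneLoss M x = t ^ 2 * (x ⬝ᵥ x - μ + t ^ 2 / 2) := by
  have hvx : v ⬝ᵥ x = 0 := by rwa [dotProduct_comm]
  have hQ : (x + t • v) ⬝ᵥ M *ᵥ (x + t • v) = x ⬝ᵥ M *ᵥ x + t ^ 2 * μ := by
    simp only [mulVec_add, mulVec_smul, hx, hv, dotProduct_add, add_dotProduct, dotProduct_smul,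
      smul_dotProduct, hxv, hvx, hvv, smul_eq_mul]
    ring
  have hS : (x + t • v) ⬝ᵥ (x + t • v) = x ⬝ᵥ x + t ^ 2 := by
    simp only [dotProduct_add, add_dotProduct, dotProduct_smul, smul_dotProduct, hxv, hvx, hvv,
      smul_eq_mul]
    ring
  rw [rankOneLoss, rankOneLoss, sum_sum_sub_mul_sq, sum_sum_sub_mul_sq, hQ, hS]
  ring

end

theorem stmt2_general {d : ℕ} (M : Matrix (Fin d) (Fin d) ℝ)
    (hSymm : M.IsSymm)
    (v1 : Fin d → ℝ) (lam1 lam : ℝ)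
    (hv1unit : ∑ i, v1 i ^ 2 = 1)
    (hv1eig : M.mulVec v1 = lam1 • v1)
    (x : Fin d → ℝ)
    (hlam : lam = ∑ i, x i ^ 2)
    (hxeig : M.mulVec x = lam • x)
    (hlt : lam < lam1) :
    v1 ⬝ᵥ ((2 : ℝ) • vecMulVec x x - M + (∑ i, x i ^ 2) • (1 : Matrix (Fin d) (Fin d) ℝ)).mulVec v1
        = lam - lam1 ∧
      lam - lam1 < 0 ∧
      ¬ ((2 : ℝ) • vecMulVec x x - M + (∑ i, x i ^ 2) • (1 : Matrix (Fin d) (Fin d) ℝ)).PosSemidef ∧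
      ¬ IsLocalMin (fun y : Fin d → ℝ => (1 / 2 : ℝ) * ∑ i, ∑ j, (M i j - y i * y j) ^ 2) x := by
  rw [sum_sq_eq_dotProduct_self] at hv1unit hlam ⊢
  have hxv : x ⬝ᵥ v1 = 0 :=
    dotProduct_eq_zero_of_isSymm_of_mulVec_eq_smul hSymm hxeig hv1eig hlt.ne
  have hquad := dotProduct_smul_vecMulVec_sub_add_smul_one_mulVec hv1eig hv1unit hxv 2 (x ⬝ᵥ x)
  rw [← hlam] at hquad ⊢
  have hneg : lam - lam1 < 0 := sub_neg.2 hlt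
  refine ⟨hquad, hneg, fun hPSD => ?_, fun hmin => ?_⟩
  · have hnonneg := hPSD.dotProduct_mulVec_nonneg v1
    rw [star_trivial, hquad] at hnonneg
    exact hneg.not_ge hnonneg
  · refine not_isLocalMin_of_sub_eq_sq_mul (f := fun t => rankOneLoss M (x + t • v1))
      (c := fun t => lam - lam1 + t ^ 2 / 2) (fun t => ?_) (by fun_prop) (by simpa using hneg) ?_
    · simpa [hlam] using rankOneLoss_add_smul_sub hxeig hv1eig hv1unit hxv t
    · have hmin' : IsLocalMin (rankOneLoss M) (x + (0 : ℝ) • v1) := by rwa [zero_smul, add_zero]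
      exact hmin'.comp_continuous (g := fun t : ℝ => x + t • v1) (by fun_prop)

/-- If v₁ is a unit top eigenvector of the symmetric PSD matrix M with
eigenvalue λ₁, and x is an eigenvector with eigenvalue λ = ‖x‖₂² < λ₁, then
v₁ᵀ(2xxᵀ − M + ‖x‖₂² I)v₁ = λ − λ₁ < 0, the Hessian of g at x is not PSD, and x is
not a local minimum of g(x) = (1/2)‖M − xxᵀ‖_F². -/
theorem stmt2 {d : ℕ} (M : Matrix (Fin d) (Fin d) ℝ)
    (hSymm : M.IsSymm) (hPSD : M.PosSemidef)
    (v1 : Fin d → ℝ) (lam1 lam : ℝ)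
    (hv1unit : ∑ i, v1 i ^ 2 = 1)
    (hv1eig : M.mulVec v1 = lam1 • v1)
    (x : Fin d → ℝ) (hx : x ≠ 0)
    (hlam : lam = ∑ i, x i ^ 2)
    (hxeig : M.mulVec x = lam • x)
    (hlt : lam < lam1) :
    v1 ⬝ᵥ ((2 : ℝ) • vecMulVec x x - M + (∑ i, x i ^ 2) • (1 : Matrix (Fin d) (Fin d) ℝ)).mulVec v1
        = lam - lam1 ∧
      lam - lam1 < 0 ∧
      ¬ ((2 : ℝ) • vecMulVec x x - M + (∑ i, x i ^ 2) • (1 : Matrix (Fin d) (Fin d) ℝ)).PosSemidef ∧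
      ¬ IsLocalMin (fun y : Fin d → ℝ => (1 / 2 : ℝ) * ∑ i, ∑ j, (M i j - y i * y j) ^ 2) x :=
  stmt2_general M hSymm v1 lam1 lam hv1unit hv1eig x hlam hxeig hlt
end

section
/- Let z ∈ ℝ^d with ‖z‖₂ = 1 and g(x) = (1/2)‖zzᵀ − xxᵀ‖_F². If the Hessian ∇²g(x) = 2xxᵀ − zzᵀ + ‖x‖₂² I is positive semidefinite, then ‖x‖₂² ≥ 1/3. -/
/-! Evaluate the Hessian's quadratic form at `z` itself: positive semidefiniteness gives
`2⟨z, x⟩² - 1 + ‖x‖² ≥ 0`, and Cauchy–Schwarz `⟨z, x⟩² ≤ ‖x‖²` turns this into `3‖x‖² ≥ 1`. -/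

open Matrix Finset

section QuadraticForm

variable {α n : Type*} [Fintype n]

theorem dotProduct_vecMulVec_mulVec [CommSemiring α] (v x y w : n → α) :
    v ⬝ᵥ (vecMulVec x y *ᵥ w) = (v ⬝ᵥ x) * (y ⬝ᵥ w) := by
  rw [vecMulVec_mulVec, op_smul_eq_smul, dotProduct_smul,
    smul_eq_mul, mul_comm]

theorem dotProduct_rankTwoUpdate_mulVec_self [CommRing α] [DecidableEq n] (x z : n → α) (a c : α) :
    z ⬝ᵥ ((a • vecMulVec x x - vecMulVec z z + c • 1) *ᵥ z)
      = a * (z ⬝ᵥ x) ^ 2 - (z ⬝ᵥ z) ^ 2 + c * (z ⬝ᵥ z) := by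
  simp only [add_mulVec, sub_mulVec, smul_mulVec, one_mulVec, dotProduct_add, dotProduct_sub,
    dotProduct_smul, dotProduct_vecMulVec_mulVec, dotProduct_comm x z, smul_eq_mul]
  ring

theorem dotProduct_self_eq_sum_sq [CommSemiring α] (v : n → α) : v ⬝ᵥ v = ∑ i, v i ^ 2 := by
  simp only [dotProduct, sq]

end QuadraticForm

/-- For z with ‖z‖₂ = 1 and g(x) = (1/2)‖zzᵀ − xxᵀ‖_F², if the Hessian
∇²g(x) = 2xxᵀ − zzᵀ + ‖x‖₂² I is positive semidefinite, then ‖x‖₂² ≥ 1/3. -/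
theorem stmt12 {d : ℕ} (z : Fin d → ℝ) (hz : ∑ i, z i ^ 2 = 1)
    (x : Fin d → ℝ)
    (hHess : ((2 : ℝ) • vecMulVec x x - vecMulVec z z
        + (∑ i, x i ^ 2) • (1 : Matrix (Fin d) (Fin d) ℝ)).PosSemidef) :
    (1 / 3 : ℝ) ≤ ∑ i, x i ^ 2 := by
  have hzz : z ⬝ᵥ z = 1 := (dotProduct_self_eq_sum_sq z).trans hz
  have hHess_z : 0 ≤ 2 * (z ⬝ᵥ x) ^ 2 - 1 + ∑ i, x i ^ 2 := by
    simpa [dotProduct_rankTwoUpdate_mulVec_self, hzz] using hHess.dotProduct_mulVec_nonneg z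
  have hCS : (z ⬝ᵥ x) ^ 2 ≤ ∑ i, x i ^ 2 := by
    simpa [dotProduct, hz] using sum_mul_sq_le_sq_mul_sq univ z x
  linarith
end
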